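/- Let c = 2r with r an odd positive integer, let b be an odd integer, and let a be an integer with gcd(a, 2r) = 1. Then G(a, b; 2r) = 2 · e(−u b² / r) · G(2a, 0; r), where u is any integer with 8au ≡ 1 (mod r). -/

import Mathlib

/-- `e(x) = exp(2πix)`. -/
noncomputable def e (x : ℝ) : ℂ := Complex.exp (2 * Real.pi * Complex.I * x)

/-- The quadratic Gauss sum `G(a,b;c) = ∑_{x mod c} e((a x² + b x)/c)`. -/
noncomputable def G (a b : ℤ) (c : ℕ) : ℂ :=
  ∑ x ∈ Finset.range c, e (((a * (x : ℤ) ^ 2 + b * (x : ℤ) : ℤ) : ℝ) / (c : ℝ))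

/-!
Since `a`, `b` and `r` are odd, `x ↦ e((a x² + b x) / 2r)` has period `r`, so `G(a, b; 2r)` is
twice the sum over a system of residues mod `r`. As `2` is invertible mod `r`, `x = 2y - 4ub`
runs over such a system together with `y`; for these `x` the summand is
`e((2a y'² + b y') / r)` with `y' = y - 2ub`, and completing the square with `8au ≡ 1 (mod r)`
turns it into `e(-u b² / r) · e(2a y² / r)`.
-/

open Finset Function

lemma e_add (x y : ℝ) : e (x + y) = e x * e y := by
  rw [e, e, e, ← Complex.exp_add]
  push_cast
  ring_nf

lemma e_intCast (n : ℤ) : e n = 1 := by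
  rw [e, ← Complex.exp_int_mul_two_pi_mul_I n]
  push_cast
  ring_nf

lemma e_intCast_div_eq_of_modEq {c : ℕ} {m n : ℤ} (h : m ≡ n [ZMOD c]) :
    e (m / c) = e (n / c) := by
  rcases eq_or_ne c 0 with rfl | hc
  · rw [Int.modEq_zero_iff.mp h]
  obtain ⟨k, hk⟩ := h.dvd
  have : (n : ℝ) / c = m / c + k := by
    rw [eq_add_of_sub_eq' hk]
    push_cast
    field_simp
  rw [this, e_add, e_intCast, mul_one]

lemma Function.Periodic.apply_zmod_val {M : Type*} {c : ℕ} [NeZero c] {F : ℤ → M}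
    (hF : Periodic F c) (n : ℤ) : F (n : ZMod c).val = F n := by
  rw [ZMod.val_intCast, Int.emod_def, mul_comm]
  simpa using hF.sub_int_mul_eq (n / c)

section SumsOverResidues

variable {M : Type*} [AddCommMonoid M] {c : ℕ} {F : ℤ → M}

lemma sum_range_eq_sum_zmod [NeZero c] (f : ℕ → M) :
    ∑ x ∈ range c, f x = ∑ z : ZMod c, f z.val :=
  sum_bij' (fun x _ => (x : ZMod c)) (fun z _ => z.val) (fun _ _ => mem_univ _)
    (fun z _ => mem_range.mpr z.val_lt) (fun x hx => ZMod.val_cast_of_lt (mem_range.mp hx))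
    (fun z _ => ZMod.natCast_zmod_val z) (fun x hx => by rw [ZMod.val_cast_of_lt (mem_range.mp hx)])

lemma Function.Periodic.sum_range_mul (hF : Periodic F c) (k : ℕ) :
    ∑ x ∈ range (k * c), F x = k • ∑ x ∈ range c, F x := by
  induction k with
  | zero => simp
  | succ k ih =>
    rw [Nat.succ_mul, sum_range_add, ih, succ_nsmul]
    congr 1
    refine sum_congr rfl fun x _ => ?_
    push_cast
    rw [add_comm]
    exact hF.nat_mul k x

lemma Function.Periodic.sum_range_comp_affine (hF : Periodic F c) {s : ℤ} (hs : IsCoprime s c)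
    (t : ℤ) : ∑ x ∈ range c, F (s * x + t) = ∑ x ∈ range c, F x := by
  rcases eq_or_ne c 0 with rfl | hc
  · simp
  have : NeZero c := ⟨hc⟩
  have hunit : IsUnit (s : ZMod c) := (ZMod.coe_int_isUnit_iff_isCoprime s c).mpr hs.symm
  have hbij : Bijective fun z : ZMod c => s * z + t :=
    (AddGroup.addRight_bijective _).comp (IsUnit.isUnit_iff_mulLeft_bijective.mp hunit)
  rw [sum_range_eq_sum_zmod (fun x => F (s * x + t)), sum_range_eq_sum_zmod (fun x => F x),
    ← hbij.sum_comp (fun z => F z.val)]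
  refine Fintype.sum_congr _ _ fun z => ?_
  rw [← hF.apply_zmod_val]
  push_cast [ZMod.natCast_zmod_val]
  rfl

end SumsOverResidues

noncomputable def gaussTerm (a b : ℤ) (c : ℕ) (x : ℤ) : ℂ :=
  e (((a * x ^ 2 + b * x : ℤ) : ℝ) / c)

lemma G_eq_sum_gaussTerm (a b : ℤ) (c : ℕ) : G a b c = ∑ x ∈ range c, gaussTerm a b c x := rfl

/-- Shifting `x` by `r` adds `r (2ax + ar + b)` to the numerator, and `ar + b` is even. -/
lemma periodic_gaussTerm_two_mul {a b : ℤ} {r : ℕ} (ha : Odd a) (hb : Odd b) (hr : Odd r) :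
    Periodic (gaussTerm a b (2 * r)) r := by
  intro x
  refine e_intCast_div_eq_of_modEq (Int.ModEq.symm (Int.modEq_iff_dvd.mpr ?_))
  obtain ⟨j, hj⟩ := (ha.mul (Int.odd_coe_nat r |>.mpr hr)).add_odd hb
  refine ⟨a * x + j, ?_⟩
  push_cast
  linear_combination (r : ℤ) * hj

lemma gaussTerm_two_mul_two_mul (a b : ℤ) (c : ℕ) (x : ℤ) :
    gaussTerm a b (2 * c) (2 * x) = gaussTerm (2 * a) b c x := by
  rcases eq_or_ne c 0 with rfl | hc
  · simp [gaussTerm]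
  unfold gaussTerm
  congr 1
  push_cast
  field_simp

lemma gaussTerm_complete_square (a b : ℤ) {c : ℕ} {u : ℤ} (hu : 4 * a * u ≡ 1 [ZMOD c])
    (x : ℤ) :
    gaussTerm a b c (x - 2 * u * b) = e (((-(u * b ^ 2) : ℤ) : ℝ) / c) * gaussTerm a 0 c x := by
  have : a * (x - 2 * u * b) ^ 2 + b * (x - 2 * u * b) ≡ -(u * b ^ 2) + (a * x ^ 2 + 0 * x)
      [ZMOD c] := by
    obtain ⟨k, hk⟩ := hu.dvd
    exact Int.modEq_iff_dvd.mpr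
      ⟨k * (u * b ^ 2 - b * x), by linear_combination (u * b ^ 2 - b * x) * hk⟩
  rw [gaussTerm, e_intCast_div_eq_of_modEq this, gaussTerm, ← e_add, ← add_div,
    Int.cast_add]

theorem stmt3_general (r : ℕ) (hrodd : Odd r) (a b : ℤ) (hbodd : Odd b)
    (hco : Int.gcd a (2 * (r : ℤ)) = 1) (u : ℤ) (hu : 8 * a * u ≡ 1 [ZMOD r]) :
    G a b (2 * r) = 2 * e (((-(u * b ^ 2) : ℤ) : ℝ) / (r : ℝ)) * G (2 * a) 0 r := by
  have ha : Odd a :=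
    Int.isCoprime_two_right.mp (Int.isCoprime_iff_gcd_eq_one.mpr hco).of_mul_right_left
  have hu' : 4 * (2 * a) * u ≡ 1 [ZMOD r] := by convert hu using 2; ring
  have hF := periodic_gaussTerm_two_mul ha hbodd hrodd
  calc G a b (2 * r) = 2 • ∑ x ∈ range r, gaussTerm a b (2 * r) x := by
        rw [G_eq_sum_gaussTerm]; exact_mod_cast hF.sum_range_mul 2
    _ = 2 • ∑ x ∈ range r, gaussTerm a b (2 * r) (2 * x + -(4 * u * b)) := by
        rw [hF.sum_range_comp_affine (Int.isCoprime_two_left.mpr (Int.odd_coe_nat r |>.mpr hrodd))]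
    _ = 2 • ∑ x ∈ range r, gaussTerm (2 * a) b r (x - 2 * u * b) := by
        congr! 2 with x
        rw [← gaussTerm_two_mul_two_mul]
        ring_nf
    _ = 2 * e (((-(u * b ^ 2) : ℤ) : ℝ) / (r : ℝ)) * G (2 * a) 0 r := by
        simp_rw [gaussTerm_complete_square (2 * a) b hu', ← mul_sum, ← G_eq_sum_gaussTerm,
          nsmul_eq_mul]
        push_cast
        ring

theorem stmt3 (r : ℕ) (hr : 0 < r) (hrodd : Odd r) (a b : ℤ) (hbodd : Odd b)
    (hco : Int.gcd a (2 * (r : ℤ)) = 1) (u : ℤ) (hu : 8 * a * u ≡ 1 [ZMOD r]) :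
    G a b (2 * r) = 2 * e (((-(u * b ^ 2) : ℤ) : ℝ) / (r : ℝ)) * G (2 * a) 0 r :=
  stmt3_general r hrodd a b hbodd hco u hu
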